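/- arXiv:1605.06755 — 2 statements merged into one kernel-verified Lean document; each statement's English description precedes it below -/
import Mathlib

section
/- For a path connected finite T₀ space P, there exists m ≥ 0 with CC_m(P) ≤ (#Max(P))², where Max(P) is the set of maximal points of P. -/
/-! Both `P` and the fence `J m` carry the lower-set topology, so continuous maps between them,
and between their finite products and subspaces, are exactly the monotone maps. Connectedness of
`P` makes any two points joinable by a zigzag `y = v₀ ≤ u₀ ≥ v₁ ≤ u₁ ≥ ⋯ = z`, and padding by
constant steps gives one common length for all pairs, since `P × P` is finite. On `Iic (y, z)`
the motion planner sends `(a, b)` to the zigzag from `y` to `z` with its two end valleys lowered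
to `a` and `b`: this stays a zigzag and depends monotonically on `(a, b)`. The sets `Iic (y, z)`
with `y`, `z` maximal cover `P × P`. -/

open Set

/-- The finite fence poset `0 < 1 > 2 < ⋯ m` on `m+1` points. -/
def J (m : ℕ) : Type := Fin (m + 1)

namespace J

/-- The underlying natural number of a point of the fence. -/
def val {m : ℕ} (i : J m) : ℕ := @Fin.val (m + 1) i

instance (m : ℕ) : PartialOrder (J m) where
  le i j := i.val = j.val ∨ (j.val % 2 = 1 ∧ (j.val = i.val + 1 ∨ i.val = j.val + 1))
  le_refl i := Or.inl rfl
  le_trans a b c h₁ h₂ := by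
    show a.val = c.val ∨ (c.val % 2 = 1 ∧ (c.val = a.val + 1 ∨ a.val = c.val + 1))
    rcases h₁ with h₁ | h₁ <;> rcases h₂ with h₂ | h₂ <;> omega
  le_antisymm a b h₁ h₂ := by
    have : a.val = b.val := by rcases h₁ with h₁ | h₁ <;> rcases h₂ with h₂ | h₂ <;> omega
    exact @Fin.val_injective (m + 1) a b this

instance (m : ℕ) : Finite (J m) := inferInstanceAs (Finite (Fin (m + 1)))

/-- The initial point `0` of the fence. -/
def zero {m : ℕ} : J m := (0 : Fin (m + 1))

/-- The terminal point `m` of the fence. -/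
def last {m : ℕ} : J m := Fin.last m

end J

/-- The Alexandrov topology on a preordered set: open sets are the lower sets (ideals). -/
def alexTop (α : Type*) [Preorder α] : TopologicalSpace α where
  IsOpen s := IsLowerSet s
  isOpen_univ := isLowerSet_univ
  isOpen_inter _ _ := IsLowerSet.inter
  isOpen_sUnion _ := isLowerSet_sUnion

instance (m : ℕ) : TopologicalSpace (J m) := alexTop (J m)

/-- `P × P` can be covered by `n` open sets, each admitting a continuous section of
`q_m : P^{J_m} → P × P`, `γ ↦ (γ(0), γ(m))`. -/
def hasCCCover (P : Type*) [TopologicalSpace P] (m n : ℕ) : Prop :=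
  ∃ U : Fin n → Set (P × P), (∀ i, IsOpen (U i)) ∧ (⋃ i, U i) = Set.univ ∧
    ∀ i, ∃ s : C(U i, C(J m, P)),
      ∀ x : U i, (s x) J.zero = (x : P × P).1 ∧ (s x) J.last = (x : P × P).2

/-- The combinatorial complexity at length `m`. -/
noncomputable def CCm (P : Type*) [TopologicalSpace P] (m : ℕ) : ℕ∞ :=
  sInf ((↑) '' {n : ℕ | hasCCCover P m n})

/-- The combinatorial complexity `CC(P) = min_m CC_m(P)`. -/
noncomputable def CC (P : Type*) [TopologicalSpace P] : ℕ∞ := ⨅ m, CCm P m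

/-- `X × X` can be covered by `n` open sets, each admitting a continuous section of the
path fibration `X^I → X × X`. -/
def hasTCCover (X : Type*) [TopologicalSpace X] (n : ℕ) : Prop :=
  ∃ U : Fin n → Set (X × X), (∀ i, IsOpen (U i)) ∧ (⋃ i, U i) = Set.univ ∧
    ∀ i, ∃ s : C(U i, C(unitInterval, X)),
      ∀ x : U i, (s x) 0 = (x : X × X).1 ∧ (s x) 1 = (x : X × X).2

/-- Farber's topological complexity. -/
noncomputable def topComplexity (X : Type*) [TopologicalSpace X] : ℕ∞ :=
  sInf ((↑) '' {n : ℕ | hasTCCover X n})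

/-- A subset is contractible in the ambient space when its inclusion is null-homotopic. -/
def ContractibleIn {X : Type*} [TopologicalSpace X] (A : Set X) : Prop :=
  ∃ x₀ : X, ContinuousMap.Homotopic ⟨Subtype.val, continuous_subtype_val⟩
    (ContinuousMap.const A x₀)

/-- The (unreduced) Lusternik–Schnirelmann category. -/
noncomputable def cat (X : Type*) [TopologicalSpace X] : ℕ∞ :=
  sInf ((↑) '' {n : ℕ | ∃ U : Fin n → Set X, (∀ i, IsOpen (U i)) ∧ (⋃ i, U i) = Set.univ ∧
    ∀ i, ContractibleIn (U i)})

open Relation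

namespace Topology.IsLowerSet

variable {α β : Type*} [Preorder α] [Preorder β] [TopologicalSpace α] [TopologicalSpace β]

lemma of_isOpen_iff (h : ∀ s : Set α, IsOpen s ↔ IsLowerSet s) : Topology.IsLowerSet α :=
  ⟨TopologicalSpace.ext (funext fun s => propext (h s))⟩

instance prod [Topology.IsLowerSet α] [Topology.IsLowerSet β] :
    Topology.IsLowerSet (α × β) :=
  Topology.isLowerSet_iff_nhds.2 fun a => by
    rw [nhds_prod_eq, nhds_eq_principal_Iic, nhds_eq_principal_Iic, Filter.prod_principal_principal,
      Iic_prod_eq]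

instance subtype [Topology.IsLowerSet α] (p : α → Prop) : Topology.IsLowerSet (Subtype p) :=
  Topology.isLowerSet_iff_nhds.2 fun a => by
    rw [nhds_induced, nhds_eq_principal_Iic, Filter.comap_principal]
    rfl

end Topology.IsLowerSet

instance (m : ℕ) : Topology.IsLowerSet (J m) := ⟨rfl⟩

section Zigzag

variable {P : Type*}

/-- The values `v` sit at the even points of the fence (its minima), `u` at the odd ones. -/
def zigzagPath (v u : ℕ → P) (j : ℕ) : P := if j % 2 = 0 then v (j / 2) else u (j / 2)

lemma zigzagPath_two_mul (v u : ℕ → P) (k : ℕ) : zigzagPath v u (2 * k) = v k := by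
  simp [zigzagPath]

lemma zigzagPath_two_mul_add_one (v u : ℕ → P) (k : ℕ) : zigzagPath v u (2 * k + 1) = u k := by
  rw [zigzagPath, if_neg (by omega), show (2 * k + 1) / 2 = k by omega]

variable [Preorder P]

def IsZigzag (v u : ℕ → P) : Prop := ∀ i, v i ≤ u i ∧ v (i + 1) ≤ u i

lemma IsZigzag.of_le {v w u : ℕ → P} (h : IsZigzag v u) (hwv : w ≤ v) : IsZigzag w u :=
  fun i => ⟨(hwv i).trans (h i).1, (hwv (i + 1)).trans (h i).2⟩

lemma zigzagPath_mono_left {v w : ℕ → P} (hvw : v ≤ w) (u : ℕ → P) (j : ℕ) :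
    zigzagPath v u j ≤ zigzagPath w u j := by
  unfold zigzagPath
  split_ifs
  exacts [hvw _, le_rfl]

lemma IsZigzag.zigzagPath_le {v u : ℕ → P} (h : IsZigzag v u) {i j : ℕ} (hj : j % 2 = 1)
    (hij : j = i + 1 ∨ i = j + 1) : zigzagPath v u i ≤ zigzagPath v u j := by
  obtain ⟨k, rfl⟩ : ∃ k, j = 2 * k + 1 := ⟨j / 2, by omega⟩
  rcases hij with hij | rfl
  · obtain rfl : i = 2 * k := by omega
    rw [zigzagPath_two_mul_add_one, zigzagPath_two_mul]
    exact (h k).1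
  · rw [zigzagPath_two_mul_add_one, show 2 * k + 1 + 1 = 2 * (k + 1) by ring, zigzagPath_two_mul]
    exact (h k).2

lemma IsZigzag.monotone_zigzagPath {v u : ℕ → P} (h : IsZigzag v u) (m : ℕ) :
    Monotone fun j : J m => zigzagPath v u j.val := by
  rintro i j (hij | ⟨hj, hij⟩)
  · simp only [hij, le_rfl]
  · exact h.zigzagPath_le hj hij

lemma exists_isZigzag_of_reflTransGen {y z : P}
    (h : ReflTransGen (fun a b => ∃ c, a ≤ c ∧ b ≤ c) y z) :
    ∃ k, ∃ v u : ℕ → P, IsZigzag v u ∧ v 0 = y ∧ ∀ i ≥ k, v i = z := by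
  induction h with
  | refl => exact ⟨0, fun _ => y, fun _ => y, fun _ => ⟨le_rfl, le_rfl⟩, rfl, fun _ _ => rfl⟩
  | @tail b c _ hbc ih =>
    obtain ⟨k, v, u, hvu, hv0, hvk⟩ := ih
    obtain ⟨w, hbw, hcw⟩ := hbc
    refine ⟨k + 1, fun i => if i ≤ k then v i else c,
      fun i => if i < k then u i else if i = k then w else c, fun i => ?_, by simpa using hv0,
      fun i hi => by simp only [if_neg (show ¬ i ≤ k by omega)]⟩
    rcases lt_trichotomy i k with hik | rfl | hik
    · simp only [if_pos hik.le, if_pos (show i + 1 ≤ k by omega), if_pos hik]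
      exact hvu i
    · simp only [le_rfl, if_true, lt_irrefl, if_false, if_neg (show ¬ i + 1 ≤ i by omega),
        hvk i le_rfl]
      exact ⟨hbw, hcw⟩
    · simp only [if_neg (show ¬ i ≤ k by omega), if_neg (show ¬ i + 1 ≤ k by omega),
        if_neg (show ¬ i < k by omega), if_neg hik.ne']
      exact ⟨le_rfl, le_rfl⟩

end Zigzag

def HasMotionPlannerOn (P : Type*) [TopologicalSpace P] (m : ℕ) (U : Set (P × P)) : Prop :=
  ∃ s : C(U, C(J m, P)), ∀ x : U, (s x) J.zero = (x : P × P).1 ∧ (s x) J.last = (x : P × P).2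

lemma CCm_le_of_hasCCCover {P : Type*} [TopologicalSpace P] {m n : ℕ} (h : hasCCCover P m n) :
    CCm P m ≤ n :=
  sInf_le ⟨n, h, rfl⟩

lemma Finite.exists_le_isMax {α : Type*} [Preorder α] [Finite α] (a : α) :
    ∃ b, a ≤ b ∧ IsMax b := by
  obtain ⟨b, hab, hb⟩ := Finite.exists_le_maximal (p := fun _ : α => True) (a := a) trivial
  exact ⟨b, hab, fun c hbc => hb.2 trivial hbc⟩

section LowerSetTopology

variable {P : Type*} [Preorder P] [TopologicalSpace P] [Topology.IsLowerSet P]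

lemma reflTransGen_of_preconnectedSpace [PreconnectedSpace P] (y z : P) :
    ReflTransGen (fun a b => ∃ c, a ≤ c ∧ b ≤ c) y z := by
  refine PreconnectedSpace.induction₂' _ (fun x => ?_) ⟨fun _ _ _ => .trans⟩ y z
  rw [Topology.IsLowerSet.nhds_eq_principal_Iic, Filter.eventually_principal]
  exact fun w hwx => ⟨.single ⟨x, le_rfl, hwx⟩, .single ⟨x, hwx, le_rfl⟩⟩

lemma exists_uniform_isZigzag [Finite P] [PreconnectedSpace P] :
    ∃ K, ∀ y z : P, ∃ v u : ℕ → P, IsZigzag v u ∧ v 0 = y ∧ ∀ i ≥ K, v i = z := by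
  choose k v u hvu hv0 hvk using fun p : P × P =>
    exists_isZigzag_of_reflTransGen (reflTransGen_of_preconnectedSpace p.1 p.2)
  obtain ⟨K, hK⟩ := Finite.bddAbove_range k
  exact ⟨K, fun y z => ⟨v (y, z), u (y, z), hvu _, hv0 _,
    fun i hi => hvk _ i ((hK ⟨_, rfl⟩).trans hi)⟩⟩

lemma IsZigzag.hasMotionPlannerOn_Iic {v u : ℕ → P} (h : IsZigzag v u) {n : ℕ} (hn : n ≠ 0) :
    HasMotionPlannerOn P (2 * n) (Iic (v 0, v n)) := by
  let ends (x : P × P) : ℕ → P := Function.update (Function.update v 0 x.1) n x.2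
  have ends_mono : Monotone ends := fun x x' hxx' => update_le_update_iff.2
    ⟨hxx'.2, fun j _ => update_le_update_iff.2 ⟨hxx'.1, fun _ _ => le_rfl⟩ j⟩
  have ends_le (x : Iic (v 0, v n)) : ends x ≤ v := by
    have h0 : Function.update v 0 (x : P × P).1 ≤ v :=
      update_le_iff.2 ⟨x.2.1, fun _ _ => le_rfl⟩
    exact update_le_iff.2 ⟨x.2.2, fun j _ => h0 j⟩
  let γ (xj : Iic (v 0, v n) × J (2 * n)) : P := zigzagPath (ends xj.1) u xj.2.val
  have hγ : Monotone γ := fun a b hab =>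
    (zigzagPath_mono_left (ends_mono hab.1) u _).trans
      ((h.of_le (ends_le b.1)).monotone_zigzagPath _ hab.2)
  refine ⟨ContinuousMap.curry ⟨γ, Topology.IsLowerSet.monotone_iff_continuous.1 hγ⟩,
    fun x => ⟨?_, ?_⟩⟩
  · show zigzagPath (ends x) u (2 * 0) = (x : P × P).1
    rw [zigzagPath_two_mul]
    simp [ends, Ne.symm hn]
  · show zigzagPath (ends x) u (2 * n) = (x : P × P).2
    rw [zigzagPath_two_mul]
    simp [ends]

lemma hasCCCover_of_forall_exists_le {ι : Type*} [Finite ι] {m : ℕ} (p : ι → P × P)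
    (hp : ∀ x, ∃ i, x ≤ p i) (hs : ∀ i, HasMotionPlannerOn P m (Iic (p i))) :
    hasCCCover P m (Nat.card ι) := by
  let e := Finite.equivFin ι
  refine ⟨fun i => Iic (p (e.symm i)), fun i => ?_, ?_, fun i => hs _⟩
  · exact Topology.IsLowerSet.isOpen_iff_isLowerSet.2 (isLowerSet_Iic _)
  · refine eq_univ_of_forall fun x => mem_iUnion.2 ?_
    obtain ⟨i, hi⟩ := hp x
    exact ⟨e i, by simpa using hi⟩

end LowerSetTopology

/-- For a path connected finite space `P` there is `m` with
`CC_m(P) ≤ (#Max(P))²`. -/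
theorem exists_CCm_le_card_max_sq
    (P : Type) [PartialOrder P] [Finite P] [TopologicalSpace P] [PathConnectedSpace P]
    (hP : ∀ s : Set P, IsOpen s ↔ IsLowerSet s) :
    ∃ m : ℕ, CCm P m ≤ (Nat.card {x : P // IsMax x} : ℕ∞) ^ 2 := by
  have : Topology.IsLowerSet P := .of_isOpen_iff hP
  obtain ⟨K, hK⟩ := exists_uniform_isZigzag (P := P)
  let M := {x : P // IsMax x}
  have hcover : hasCCCover P (2 * (K + 1)) (Nat.card (M × M)) := by
    refine hasCCCover_of_forall_exists_le (fun yz : M × M => ((yz.1 : P), (yz.2 : P))) ?_ ?_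
    · intro x
      obtain ⟨y, hy, hymax⟩ := Finite.exists_le_isMax x.1
      obtain ⟨z, hz, hzmax⟩ := Finite.exists_le_isMax x.2
      exact ⟨(⟨y, hymax⟩, ⟨z, hzmax⟩), hy, hz⟩
    · rintro ⟨y, z⟩
      obtain ⟨v, u, hvu, hv0, hvK⟩ := hK y z
      simpa [hv0, hvK (K + 1) (by omega)] using
        hvu.hasMotionPlannerOn_Iic (n := K + 1) (by omega)
  refine ⟨2 * (K + 1), (CCm_le_of_hasCCCover hcover).trans ?_⟩
  simp [Nat.card_prod, sq, M]
end

section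
/- A path connected finite T₀ space P is contractible if and only if CC(P) = 1. -/
open Set

/-!
In the Alexandrov topology continuous maps are the monotone maps, and maps `f ≤ g` are homotopic
(stay at `f` until time `1`, then jump to `g`). A contraction is a path from `id` to a constant
in `C(P, P)`; for finite `P` every `Iic f` is open there, so the classes of the equivalence
relation generated by `≤` are clopen and the path yields a fence `id ≤ ≥ ⋯ const` of comparable
maps, and conversely a fence gives a contraction. On the other side, a section of `q_m` over all
of `P × P` is the same as a fence of length `m` from `Prod.fst` to `Prod.snd` in `C(P × P, P)`,
and fences `id ⇝ const x₀` and `fst ⇝ snd` are exchanged by composing with the projections and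
with `x ↦ (x, x₀)`.
-/

open Relation

namespace J

variable {m : ℕ} {α : Type*} [Preorder α]

lemma le_iff {a b : J m} :
    a ≤ b ↔ a.val = b.val ∨ (b.val % 2 = 1 ∧ (b.val = a.val + 1 ∨ a.val = b.val + 1)) :=
  Iff.rfl

lemma val_le (i : J m) : i.val ≤ m := Nat.lt_succ_iff.mp (@Fin.isLt (m + 1) i)

lemma symmGen_castSucc_succ (i : Fin m) :
    SymmGen (α := J m) (· ≤ ·) i.castSucc i.succ := by
  rcases Nat.mod_two_eq_zero_or_one i with h | h
  · exact .of_le <| le_iff.2 <| Or.inr ⟨by simp [J.val]; omega, Or.inl (by simp [J.val])⟩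
  · exact .of_ge <| le_iff.2 <| Or.inr ⟨by simpa [J.val] using h, Or.inr (by simp [J.val])⟩

lemma monotone_comp_val {d : ℕ → α}
    (hd : ∀ i < m, if i % 2 = 0 then d i ≤ d (i + 1) else d (i + 1) ≤ d i) :
    Monotone fun j : J m => d j.val := by
  rintro a b (h | ⟨hodd, h | h⟩)
  · simp only [h, le_refl]
  · have := hd a.val (by have := b.val_le; omega)
    rwa [if_pos (by omega), ← h] at this
  · have := hd b.val (by have := a.val_le; omega)
    rwa [if_neg (by omega), ← h] at this

theorem reflTransGen_symmGen_of_monotone {c : J m → α} (hc : Monotone c) :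
    ReflTransGen (SymmGen (· ≤ ·)) (c zero) (c last) :=
  Fin.induction (motive := fun i => ReflTransGen (SymmGen (· ≤ ·)) (c zero) (c i)) .refl
    (fun i ih => ih.tail <| (symmGen_castSucc_succ i).elim (.of_le <| hc ·) (.of_ge <| hc ·))
    (Fin.last m)

end J

section Fence

variable {α : Type*} [Preorder α]

lemma Relation.SymmGen.exists_le_le {a b : α} (h : SymmGen (· ≤ ·) a b) : ∃ u, a ≤ u ∧ b ≤ u :=
  h.elim (fun h => ⟨b, h, le_rfl⟩) (fun h => ⟨a, le_rfl, h⟩)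

/-- Keeping the length even keeps the endpoint at a minimum of the fence, so a comparable
successor can always be attached through a common upper bound. -/
theorem exists_zigzag_of_reflTransGen {a b : α} (h : ReflTransGen (SymmGen (· ≤ ·)) a b) :
    ∃ n, ∃ d : ℕ → α, d 0 = a ∧ d (2 * n) = b ∧
      ∀ i < 2 * n, if i % 2 = 0 then d i ≤ d (i + 1) else d (i + 1) ≤ d i := by
  induction h with
  | refl => exact ⟨0, fun _ => a, rfl, rfl, by simp⟩
  | @tail b c _ hbc ih =>
    obtain ⟨n, d, hd0, hdn, hd⟩ := ih
    obtain ⟨u, hbu, hcu⟩ := SymmGen.exists_le_le hbc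
    refine ⟨n + 1, fun i => if i ≤ 2 * n then d i else if i = 2 * n + 1 then u else c,
      by simpa using hd0, by simp [show 2 * (n + 1) = 2 * n + 2 by ring], fun i hi => ?_⟩
    rcases lt_trichotomy i (2 * n) with hlt | rfl | hgt
    · simpa [hlt.le, Nat.succ_le_of_lt hlt] using hd i hlt
    · simpa [hdn] using hbu
    · obtain rfl : i = 2 * n + 1 := by omega
      simpa [Nat.add_mod] using hcu

theorem reflTransGen_symmGen_iff_exists_monotone_J {a b : α} :
    ReflTransGen (SymmGen (· ≤ ·)) a b ↔
      ∃ m, ∃ c : J m → α, Monotone c ∧ c J.zero = a ∧ c J.last = b := by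
  refine ⟨fun h => ?_,
    fun ⟨m, c, hc, hc0, hcm⟩ => hc0 ▸ hcm ▸ J.reflTransGen_symmGen_of_monotone hc⟩
  obtain ⟨n, d, hd0, hdn, hd⟩ := exists_zigzag_of_reflTransGen h
  exact ⟨2 * n, fun j => d j.val, J.monotone_comp_val hd, by simpa [J.val, J.zero] using hd0, hdn⟩

end Fence

section Alexandrov

open Topology Filter

instance inst_s14 (m : ℕ) : Topology.IsLowerSet (J m) := ⟨rfl⟩

instance Prod.instIsLowerSet {α β : Type*} [Preorder α] [Preorder β] [TopologicalSpace α]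
    [TopologicalSpace β] [Topology.IsLowerSet α] [Topology.IsLowerSet β] :
    Topology.IsLowerSet (α × β) :=
  Topology.isLowerSet_iff_nhds.2 fun p => by
    rw [nhds_prod_eq, IsLowerSet.nhds_eq_principal_Iic, IsLowerSet.nhds_eq_principal_Iic,
      prod_principal_principal, Iic_prod_Iic]

lemma ContinuousMap.homotopic_of_specializes {X Y : Type*} [TopologicalSpace X]
    [TopologicalSpace Y] {f g : C(X, Y)} (h : ∀ x, f x ⤳ g x) : f.Homotopic g := by
  classical
  let H : unitInterval × X → Y := fun q => if q.1 = 1 then g q.2 else f q.2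
  have hH : Continuous H := continuous_def.2 fun V hV => by
    have : H ⁻¹' V = (f ∘ Prod.snd) ⁻¹' V ∩ (Prod.fst ⁻¹' {1}ᶜ ∪ (g ∘ Prod.snd) ⁻¹' V) := by
      ext ⟨t, x⟩
      by_cases ht : t = 1
      · simpa [H, ht] using fun hg => (h x).mem_open hV hg
      · simp [H, ht]
    rw [this]
    exact (hV.preimage (by fun_prop)).inter
      ((isOpen_compl_singleton.preimage continuous_fst).union (hV.preimage (by fun_prop)))
  exact ⟨⟨⟨H, hH⟩, fun x => by simp [H], fun x => by simp [H]⟩⟩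

variable {X P : Type*} [TopologicalSpace X] [PartialOrder P] [TopologicalSpace P]
  [Topology.IsLowerSet P]

lemma ContinuousMap.monotone_of_isLowerSet [Preorder X] [Topology.IsLowerSet X] (f : C(X, P)) :
    Monotone f :=
  IsLowerSet.monotone_iff_continuous.2 f.continuous

lemma ContinuousMap.homotopic_of_le {f g : C(X, P)} (h : f ≤ g) : f.Homotopic g :=
  homotopic_of_specializes fun x => IsLowerSet.specializes_iff_le.2 (h x)

lemma ContinuousMap.homotopic_of_reflTransGen {f g : C(X, P)}
    (h : ReflTransGen (SymmGen (· ≤ ·)) f g) : f.Homotopic g :=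
  reflTransGen_le_of_equivalence_of_le Homotopic.equivalence
    (fun _ _ h => h.elim homotopic_of_le fun h => (homotopic_of_le h).symm) _ _ h

lemma ContinuousMap.isOpen_Iic [Finite X] (f : C(X, P)) : IsOpen (Iic f) := by
  have : Iic f = ⋂ x, (fun g : C(X, P) => g x) ⁻¹' Iic (f x) := by
    ext g; simp [ContinuousMap.le_def]
  rw [this]
  exact isOpen_iInter_of_finite fun x =>
    (IsLowerSet.isOpen_iff_isLowerSet.2 (isLowerSet_Iic _)).preimage (continuous_eval_const x)

end Alexandrov

theorem reflTransGen_symmGen_of_mem_connectedComponent {α : Type*} [Preorder α]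
    [TopologicalSpace α] (hIic : ∀ a : α, IsOpen (Iic a)) {a b : α}
    (hb : b ∈ connectedComponent a) : ReflTransGen (SymmGen (· ≤ ·)) a b := by
  set S := {b | ReflTransGen (SymmGen (· ≤ ·)) a b}
  have hmem_iff {b c : α} (hcb : c ≤ b) : c ∈ S ↔ b ∈ S :=
    ⟨fun h => h.tail (.of_le hcb), fun h => h.tail (.of_ge hcb)⟩
  have hS : IsClopen S := by
    refine ⟨isOpen_compl_iff.1 <| isOpen_iff_forall_mem_open.2 fun b hb => ?_,
      isOpen_iff_forall_mem_open.2 fun b hb => ?_⟩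
    · exact ⟨Iic b, fun c hcb => mt (hmem_iff hcb).1 hb, hIic b, le_rfl⟩
    · exact ⟨Iic b, fun c hcb => (hmem_iff hcb).2 hb, hIic b, le_rfl⟩
  exact hS.connectedComponent_subset ReflTransGen.refl hb

section Contractible

variable {P : Type*} [PartialOrder P] [TopologicalSpace P] [Topology.IsLowerSet P]

theorem contractibleSpace_iff_exists_reflTransGen [Finite P] :
    ContractibleSpace P ↔
      ∃ x₀ : P, ReflTransGen (SymmGen (· ≤ ·)) (ContinuousMap.id P) (.const P x₀) := by
  rw [contractible_iff_id_nullhomotopic]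
  refine exists_congr fun x₀ => ⟨fun ⟨H⟩ => ?_, ContinuousMap.homotopic_of_reflTransGen⟩
  have hH : H.curry 1 ∈ connectedComponent (H.curry 0) :=
    (isPreconnected_range H.curry.continuous).subset_connectedComponent ⟨0, rfl⟩ ⟨1, rfl⟩
  convert reflTransGen_symmGen_of_mem_connectedComponent ContinuousMap.isOpen_Iic hH <;>
    ext <;> simp

end Contractible

lemma Relation.ReflTransGen.continuousMap_comp {X Y Z : Type*} [TopologicalSpace X]
    [TopologicalSpace Y] [TopologicalSpace Z] [PartialOrder Z] {f g : C(Y, Z)}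
    (h : ReflTransGen (SymmGen (· ≤ ·)) f g) (k : C(X, Y)) :
    ReflTransGen (SymmGen (· ≤ ·)) (f.comp k) (g.comp k) :=
  h.lift (·.comp k) (fun _ _ h => h.elim (fun h => .of_le fun x => h (k x))
    fun h => .of_ge fun x => h (k x))

theorem exists_reflTransGen_id_const_iff {X : Type*} [TopologicalSpace X] [PartialOrder X]
    [Nonempty X] :
    (∃ x₀ : X, ReflTransGen (SymmGen (· ≤ ·)) (ContinuousMap.id X) (.const X x₀)) ↔
      ReflTransGen (SymmGen (· ≤ ·)) (ContinuousMap.fst : C(X × X, X)) .snd := by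
  refine ⟨fun ⟨x₀, h⟩ => ?_, fun h => ?_⟩
  · exact (h.continuousMap_comp .fst).trans (symm (h.continuousMap_comp .snd))
  · obtain ⟨x₀⟩ := ‹Nonempty X›
    exact ⟨x₀, h.continuousMap_comp ((ContinuousMap.id X).prodMk (.const X x₀))⟩

section CombinatorialComplexity

variable {P : Type*} [TopologicalSpace P] {m : ℕ}

lemma hasCCCover_zero_iff : hasCCCover P m 0 ↔ IsEmpty P := by
  refine ⟨fun ⟨U, _, hU, _⟩ => ⟨fun x => ?_⟩, fun _ => ?_⟩
  · simpa [← hU] using mem_univ (x, x)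
  · exact ⟨Fin.elim0, fun i => i.elim0, Subsingleton.elim _ _, fun i => i.elim0⟩

lemma hasCCCover_one_iff : hasCCCover P m 1 ↔
    ∃ s : C(P × P, C(J m, P)), ∀ p, s p J.zero = p.1 ∧ s p J.last = p.2 := by
  constructor
  · rintro ⟨U, -, hU, hs⟩
    obtain ⟨s, hs⟩ := hs 0
    have hU0 (p : P × P) : p ∈ U 0 := by simpa [← hU] using mem_univ p
    exact ⟨s.comp ⟨fun p => ⟨p, hU0 p⟩, by fun_prop⟩, fun p => hs _⟩
  · rintro ⟨s, hs⟩
    exact ⟨fun _ => univ, fun _ => isOpen_univ, iUnion_const _,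
      fun _ => ⟨s.comp ⟨Subtype.val, continuous_subtype_val⟩, fun p => hs p⟩⟩

lemma CC_eq_zero [IsEmpty P] : CC P = 0 :=
  nonpos_iff_eq_zero.1 <| (iInf_le _ 0).trans <|
    sInf_le ⟨0, hasCCCover_zero_iff.2 ‹_›, Nat.cast_zero⟩

lemma CC_eq_one_iff [Nonempty P] : CC P = 1 ↔ ∃ m, hasCCCover P m 1 := by
  have hpos (m n : ℕ) (h : hasCCCover P m n) : 1 ≤ n :=
    Nat.one_le_iff_ne_zero.2 fun hn => (hasCCCover_zero_iff.1 (hn ▸ h)).false ‹Nonempty P›.some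
  constructor
  · intro h
    obtain ⟨m, hm⟩ := ciInf_mem (CCm P)
    replace hm : CCm P m = 1 := hm.trans h
    have hne : {n | hasCCCover P m n}.Nonempty := by
      by_contra hemp
      simp [CCm, not_nonempty_iff_eq_empty.1 hemp] at hm
    obtain ⟨n, hn, hn1⟩ := csInf_mem (hne.image ((↑) : ℕ → ℕ∞))
    rw [← CCm, hm] at hn1
    exact ⟨m, Nat.cast_eq_one.1 hn1 ▸ hn⟩
  · rintro ⟨m, hm⟩
    refine le_antisymm ((iInf_le _ m).trans (sInf_le ⟨1, hm, Nat.cast_one⟩)) ?_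
    exact le_iInf fun m => le_sInf fun _ ⟨n, hn, hn1⟩ => hn1 ▸ Nat.one_le_cast.2 (hpos m n hn)

end CombinatorialComplexity

theorem exists_section_iff_exists_monotone {P : Type*} [PartialOrder P] [TopologicalSpace P]
    [Topology.IsLowerSet P] {m : ℕ} :
    (∃ s : C(P × P, C(J m, P)), ∀ p, s p J.zero = p.1 ∧ s p J.last = p.2) ↔
      ∃ c : J m → C(P × P, P), Monotone c ∧ c J.zero = .fst ∧ c J.last = .snd := by
  constructor
  · rintro ⟨s, hs⟩
    refine ⟨fun j => ⟨fun p => s p j, by fun_prop⟩, fun j k hjk p => ?_, ?_, ?_⟩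
    · exact (s p).monotone_of_isLowerSet hjk
    · ext p; exact (hs p).1
    · ext p; exact (hs p).2
  · rintro ⟨c, hc, hc0, hcm⟩
    have hΓ : Monotone fun q : (P × P) × J m => c q.2 q.1 := fun q r ⟨hqr, hjk⟩ =>
      ((c q.2).monotone_of_isLowerSet hqr).trans (hc hjk r.1)
    refine ⟨ContinuousMap.curry ⟨_, Topology.IsLowerSet.monotone_iff_continuous.1 hΓ⟩,
      fun p => ⟨?_, ?_⟩⟩
    · simp [hc0]
    · simp [hcm]

theorem contractible_iff_CC_eq_one_general
    (P : Type) [PartialOrder P] [Finite P] [TopologicalSpace P]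
    (hP : ∀ s : Set P, IsOpen s ↔ IsLowerSet s) :
    ContractibleSpace P ↔ CC P = 1 := by
  have : Topology.IsLowerSet P := ⟨TopologicalSpace.ext_iff.2 hP⟩
  rcases isEmpty_or_nonempty P with hempty | hnonempty
  · simp only [CC_eq_zero, zero_ne_one, iff_false]
    exact fun _ => not_isEmpty_of_nonempty P hempty
  · simp_rw [contractibleSpace_iff_exists_reflTransGen, exists_reflTransGen_id_const_iff,
      reflTransGen_symmGen_iff_exists_monotone_J, CC_eq_one_iff, hasCCCover_one_iff,
      exists_section_iff_exists_monotone]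

/-- A path connected finite space `P` is contractible iff `CC(P) = 1`. -/
theorem contractible_iff_CC_eq_one
    (P : Type) [PartialOrder P] [Finite P] [TopologicalSpace P] [PathConnectedSpace P]
    (hP : ∀ s : Set P, IsOpen s ↔ IsLowerSet s) :
    ContractibleSpace P ↔ CC P = 1 :=
  contractible_iff_CC_eq_one_general P hP
end
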